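/- Let (A, ·, α) be a multiplicative Hom-alternative algebra. Then the commutator algebra (A, [−,−], α), with [x,y] := x·y − y·x, is a Hom-Malcev algebra: [−,−] is skew-symmetric and satisfies the Hom-Malcev identity Σ_{(α(x), α(y), z_x)} [[α(x), α(y)], α(z_x)] = [Σ_cyc [[x,y], α(z)], α²(x)], where z_x := [x,z], the left-hand cyclic sum is over the triple (α(x), α(y), z_x), and Σ_cyc on the right is the cyclic sum over x,y,z. -/

import Mathlib

/-! In a Hom-alternative algebra the Hom-Jacobian of the commutator bracket is six times the
Hom-associator `as`, so the Hom-Malcev identity reduces to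
`as(α x, α y, [x, z]) = [as(x, y, z), α² x]`. This splits into the Hom-versions
`as(α x, α y, x z) = as(x, y, z) α² x` and `as(α x, α y, z x) = α² x as(x, y, z)` of the classical
identities of alternative algebras, which follow from the Hom-Teichmüller identity (valid in every
multiplicative Hom-algebra) and alternation, once `as(α x, α y, x y) = 0` is known. -/

section CommRing

variable {K A : Type*} [CommRing K] [AddCommGroup A] [Module K A]

def homAssoc (μ : A →ₗ[K] A →ₗ[K] A) (α : A →ₗ[K] A) (x y z : A) : A :=
  μ (μ x y) (α z) - μ (α x) (μ y z)

def IsHomAlternative (μ : A →ₗ[K] A →ₗ[K] A) (α : A →ₗ[K] A) : Prop :=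
  ∀ x y z : A, (x = y ∨ y = z ∨ x = z) → homAssoc μ α x y z = 0

def homJacobian (β : A →ₗ[K] A →ₗ[K] A) (α : A →ₗ[K] A) (x y z : A) : A :=
  β (β x y) (α z) + β (β y z) (α x) + β (β z x) (α y)

variable {μ : A →ₗ[K] A →ₗ[K] A} {α : A →ₗ[K] A}

theorem homAssoc_add_left (x x' y z : A) :
    homAssoc μ α (x + x') y z = homAssoc μ α x y z + homAssoc μ α x' y z := by
  simp only [homAssoc, map_add, LinearMap.add_apply]
  abel

theorem homAssoc_add_middle (x y y' z : A) :
    homAssoc μ α x (y + y') z = homAssoc μ α x y z + homAssoc μ α x y' z := by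
  simp only [homAssoc, map_add, LinearMap.add_apply]
  abel

theorem homAssoc_add_right (x y z z' : A) :
    homAssoc μ α x y (z + z') = homAssoc μ α x y z + homAssoc μ α x y z' := by
  simp only [homAssoc, map_add]
  abel

theorem homAssoc_teichmuller (hmult : ∀ x y, α (μ x y) = μ (α x) (α y)) (w x y z : A) :
    homAssoc μ α (μ w x) (α y) (α z) - homAssoc μ α (α w) (μ x y) (α z)
        + homAssoc μ α (α w) (α x) (μ y z)
      = μ (α (α w)) (homAssoc μ α x y z) + μ (homAssoc μ α w x y) (α (α z)) := by
  simp only [homAssoc, hmult, map_sub, LinearMap.sub_apply]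
  abel

namespace IsHomAlternative

theorem homAssoc_swap_left (h : IsHomAlternative μ α) (x y z : A) :
    homAssoc μ α y x z = -homAssoc μ α x y z := by
  have hxy := h (x + y) (x + y) z (Or.inl rfl)
  simp only [homAssoc_add_left, homAssoc_add_middle, h x x z (Or.inl rfl),
    h y y z (Or.inl rfl)] at hxy
  linear_combination (norm := abel) hxy

theorem homAssoc_swap_right (h : IsHomAlternative μ α) (x y z : A) :
    homAssoc μ α x z y = -homAssoc μ α x y z := by
  have hyz := h x (y + z) (y + z) (Or.inr (Or.inl rfl))
  simp only [homAssoc_add_middle, homAssoc_add_right, h x y y (Or.inr (Or.inl rfl)),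
    h x z z (Or.inr (Or.inl rfl))] at hyz
  linear_combination (norm := abel) hyz

theorem homAssoc_rotate (h : IsHomAlternative μ α) (x y z : A) :
    homAssoc μ α y z x = homAssoc μ α x y z := by
  rw [h.homAssoc_swap_right, h.homAssoc_swap_left, neg_neg]

theorem homJacobian_sub_flip (h : IsHomAlternative μ α) (x y z : A) :
    homJacobian (μ - μ.flip) α x y z = 6 • homAssoc μ α x y z := by
  have hsgn : homJacobian (μ - μ.flip) α x y z =
      homAssoc μ α x y z - homAssoc μ α y x z + homAssoc μ α y z x
        - homAssoc μ α z y x + homAssoc μ α z x y - homAssoc μ α x z y := by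
    simp only [homJacobian, homAssoc, map_sub, LinearMap.sub_apply, LinearMap.flip_apply]
    abel
  linear_combination (norm := module) hsgn - h.homAssoc_swap_left x y z
    + 3 • h.homAssoc_rotate x y z - h.homAssoc_swap_left y z x + h.homAssoc_rotate y z x
    - h.homAssoc_swap_right x y z

end IsHomAlternative
end CommRing

section Field

variable {K A : Type*} [Field K] [CharZero K] [AddCommGroup A] [Module K A]
  {μ : A →ₗ[K] A →ₗ[K] A} {α : A →ₗ[K] A}

namespace IsHomAlternative

theorem homAssoc_alpha_alpha_mul_eq_zero (h : IsHomAlternative μ α)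
    (hmult : ∀ x y, α (μ x y) = μ (α x) (α y)) (x y : A) :
    homAssoc μ α (α x) (α y) (μ x y) = 0 ∧ homAssoc μ α (α x) (α y) (μ y x) = 0 := by
  have hyxxy := homAssoc_teichmuller hmult y x x y
  have hxyxy := homAssoc_teichmuller hmult x y x y
  simp only [h (α y) (μ x x) (α y) (Or.inr (Or.inr rfl)), h x x y (Or.inl rfl),
    h y x x (Or.inr (Or.inl rfl)), map_zero, LinearMap.zero_apply] at hyxxy
  simp only [h y x y (Or.inr (Or.inr rfl)), h x y x (Or.inr (Or.inr rfl)), map_zero,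
    LinearMap.zero_apply] at hxyxy
  -- with `P = as(α x, α y, x y)`, `Q = as(α x, α y, y x)` these say `Q = P`, `2 P + Q = 0`
  have hswap : homAssoc μ α (α x) (α y) (μ y x) = homAssoc μ α (α x) (α y) (μ x y) := by
    linear_combination (norm := abel) hyxxy + h.homAssoc_rotate (μ y x) (α x) (α y)
      - h.homAssoc_swap_left (α x) (α y) (μ x y)
  have hthree : (3 : K) • homAssoc μ α (α x) (α y) (μ x y) = 0 := by
    linear_combination (norm := module) hxyxy + h.homAssoc_rotate (μ x y) (α x) (α y)
      + h.homAssoc_swap_right (α x) (α y) (μ y x) - hswap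
  have hzero := (smul_eq_zero.mp hthree).resolve_left three_ne_zero
  exact ⟨hzero, hswap.trans hzero⟩

theorem homAssoc_alpha_alpha_mul_left_antisymm (h : IsHomAlternative μ α)
    (hmult : ∀ x y, α (μ x y) = μ (α x) (α y)) (x y z : A) :
    homAssoc μ α (α x) (α z) (μ x y) = -homAssoc μ α (α x) (α y) (μ x z) := by
  have hyz := (h.homAssoc_alpha_alpha_mul_eq_zero hmult x (y + z)).1
  simp only [map_add, homAssoc_add_middle, homAssoc_add_right,
    (h.homAssoc_alpha_alpha_mul_eq_zero hmult x y).1,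
    (h.homAssoc_alpha_alpha_mul_eq_zero hmult x z).1] at hyz
  linear_combination (norm := abel) hyz

theorem homAssoc_alpha_alpha_mul_right_antisymm (h : IsHomAlternative μ α)
    (hmult : ∀ x y, α (μ x y) = μ (α x) (α y)) (x y z : A) :
    homAssoc μ α (α x) (α z) (μ y x) = -homAssoc μ α (α x) (α y) (μ z x) := by
  have hyz := (h.homAssoc_alpha_alpha_mul_eq_zero hmult x (y + z)).2
  simp only [map_add, LinearMap.add_apply, homAssoc_add_middle, homAssoc_add_right,
    (h.homAssoc_alpha_alpha_mul_eq_zero hmult x y).2,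
    (h.homAssoc_alpha_alpha_mul_eq_zero hmult x z).2] at hyz
  linear_combination (norm := abel) hyz

theorem homAssoc_alpha_alpha_mul_right (h : IsHomAlternative μ α)
    (hmult : ∀ x y, α (μ x y) = μ (α x) (α y)) (x y z : A) :
    homAssoc μ α (α x) (α y) (μ z x) = μ (α (α x)) (homAssoc μ α x y z) := by
  have hT := homAssoc_teichmuller hmult x z x y
  rw [h x z x (Or.inr (Or.inr rfl)), ← h.homAssoc_rotate z x y, LinearMap.map_zero₂,
    add_zero] at hT
  linear_combination (norm := abel) hT + h.homAssoc_rotate (μ x z) (α x) (α y)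
    - h.homAssoc_alpha_alpha_mul_left_antisymm hmult x y z
    + h.homAssoc_swap_left (μ z x) (α x) (α y) + h.homAssoc_rotate (μ z x) (α x) (α y)

theorem homAssoc_alpha_alpha_mul_left (h : IsHomAlternative μ α)
    (hmult : ∀ x y, α (μ x y) = μ (α x) (α y)) (x y z : A) :
    homAssoc μ α (α x) (α y) (μ x z) = μ (homAssoc μ α x y z) (α (α x)) := by
  have hT := homAssoc_teichmuller hmult y x z x
  rw [h x z x (Or.inr (Or.inr rfl)), h.homAssoc_swap_left x y z, map_zero, zero_add,
    map_neg, LinearMap.neg_apply] at hT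
  linear_combination (norm := abel) -hT - h.homAssoc_rotate (μ y x) (α z) (α x)
    + h.homAssoc_swap_left (α x) (α z) (μ y x)
    - h.homAssoc_alpha_alpha_mul_right_antisymm hmult x y z
    + h.homAssoc_swap_left (α x) (α y) (μ z x) - h.homAssoc_rotate (α x) (α y) (μ x z)

theorem homAssoc_alpha_alpha_sub_flip (h : IsHomAlternative μ α)
    (hmult : ∀ x y, α (μ x y) = μ (α x) (α y)) (x y z : A) :
    homAssoc μ α (α x) (α y) ((μ - μ.flip) x z)
      = (μ - μ.flip) (homAssoc μ α x y z) (α (α x)) := by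
  simp only [LinearMap.sub_apply, LinearMap.flip_apply]
  rw [← h.homAssoc_alpha_alpha_mul_left hmult, ← h.homAssoc_alpha_alpha_mul_right hmult]
  simp only [homAssoc, map_sub]
  abel

end IsHomAlternative
end Field

/-- The commutator algebra of a multiplicative Hom-alternative algebra is a
Hom-Malcev algebra. -/
theorem stmt_15 {K A : Type*} [Field K] [CharZero K] [AddCommGroup A] [Module K A]
    (μ : A →ₗ[K] A →ₗ[K] A) (α : A →ₗ[K] A)
    (hmult : ∀ x y : A, α (μ x y) = μ (α x) (α y))
    (halt : ∀ x y z : A, (x = y ∨ y = z ∨ x = z) →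
      μ (μ x y) (α z) - μ (α x) (μ y z) = 0) :
    (∀ x y : A, μ x y - μ y x = -(μ y x - μ x y)) ∧
    (∀ x y z : A,
      let br : A → A → A := fun a b => μ a b - μ b a
      br (br (α x) (α y)) (α (br x z))
        + br (br (α y) (br x z)) (α (α x))
        + br (br (br x z) (α x)) (α (α y))
        = br (br (br x y) (α z) + br (br y z) (α x) + br (br z x) (α y))
            (α (α x))) := by
  refine ⟨fun x y => (neg_sub _ _).symm, fun x y z => ?_⟩
  have h : IsHomAlternative μ α := halt
  -- `br` is the bilinear map `μ - μ.flip`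
  show homJacobian (μ - μ.flip) α (α x) (α y) ((μ - μ.flip) x z)
    = (μ - μ.flip) (homJacobian (μ - μ.flip) α x y z) (α (α x))
  rw [h.homJacobian_sub_flip, h.homJacobian_sub_flip, h.homAssoc_alpha_alpha_sub_flip hmult,
    map_nsmul, LinearMap.smul_apply]
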